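/- Let D be a strongly connected orientation of a finite undirected graph G = (V, E), let v be a vertex, and let U be the set of vertices that two-reach v in D (where u two-reaches v means there are two arc-disjoint directed paths from u to v; in particular v ∈ U). Then every connected component C of the induced undirected subgraph G[V ∖ U] has exactly one arc of D from C into U, i.e., there is exactly one arc of D whose tail lies in C and whose head lies in U. -/

import Mathlib

/-- An orientation of an undirected simple graph `G`: each edge is assigned
exactly one direction, giving the arc relation `arc`. -/
structure GraphOrientation {V : Type*} (G : SimpleGraph V) where
  arc : V → V → Prop
  adj_iff : ∀ u v, G.Adj u v ↔ (arc u v ∨ arc v u)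
  asymm : ∀ u v, arc u v → ¬ arc v u

/-- The indegree of a vertex in an orientation. -/
noncomputable def indeg {V : Type*} {G : SimpleGraph V} (D : GraphOrientation G) (v : V) : ℕ :=
  {u | D.arc u v}.ncard

/-- The list of consecutive arcs of a path given as a list of vertices. -/
def pathArcs {V : Type*} (p : List V) : List (V × V) := p.zip p.tail

/-- The list of arcs of a cycle given as a list of (distinct) vertices,
including the closing arc from the last vertex back to the first. -/
def cycleArcs {V : Type*} (p : List V) : List (V × V) := p.zip (p.rotate 1)

/-- `p` is a (simple) directed path from `u` to `v` with respect to the arc relation `A`. -/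
def IsDipath {V : Type*} (A : V → V → Prop) (p : List V) (u v : V) : Prop :=
  p.head? = some u ∧ p.getLast? = some v ∧ p.Nodup ∧ p.Chain' A

/-- `D'` is obtained from `D` by reversing exactly the arcs in the list `A`
(all of which must be arcs of `D`). -/
def ReversalAlong {V : Type*} {G : SimpleGraph V} (D D' : GraphOrientation G)
    (A : List (V × V)) : Prop :=
  (∀ a ∈ A, D.arc a.1 a.2) ∧ ∀ u v, D'.arc u v ↔ ((D.arc u v ∧ (u, v) ∉ A) ∨ (v, u) ∈ A)

/-- `D'` is obtained from `D` by reversing every arc of some directed cycle. -/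
def CycleReversal {V : Type*} {G : SimpleGraph V} (D D' : GraphOrientation G) : Prop :=
  ∃ p : List V, p ≠ [] ∧ p.Nodup ∧ ReversalAlong D D' (cycleArcs p)

/-- `D'` is obtained from `D` by a weak reversal: reversing a directed path
from `u` to `v` where `δ(u) = δ(v) - 1`. -/
def WeakReversal {V : Type*} {G : SimpleGraph V} (D D' : GraphOrientation G) : Prop :=
  ∃ (p : List V) (u v : V), IsDipath D.arc p u v ∧ indeg D u + 1 = indeg D v ∧
    ReversalAlong D D' (pathArcs p)

/-- `D` contains no reversible path, i.e. no directed path from `u` to `v`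
with `δ(u) < δ(v) - 1`. -/
def NoReversiblePath {V : Type*} {G : SimpleGraph V} (D : GraphOrientation G) : Prop :=
  ∀ u v : V, Relation.ReflTransGen D.arc u v → indeg D v ≤ indeg D u + 1

/-- The indegree sequence of an orientation, sorted in decreasing order. -/
noncomputable def degSeq {V : Type*} [Fintype V] {G : SimpleGraph V}
    (D : GraphOrientation G) : List ℕ :=
  ((Finset.univ.val.map (indeg D)).sort (· ≤ ·)).reverse

/-- Lexicographic (non-strict) comparison of lists of naturals. -/
def lexLE (l₁ l₂ : List ℕ) : Prop := l₁ = l₂ ∨ List.Lex (· < ·) l₁ l₂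

/-- `u` two-reaches `v`: there are two arc-disjoint directed paths from `u` to `v`. -/
def TwoReaches {V : Type*} (A : V → V → Prop) (u v : V) : Prop :=
  ∃ p q : List V, IsDipath A p u v ∧ IsDipath A q u v ∧ ∀ a ∈ pathArcs p, a ∉ pathArcs q

/-- Reachability inside the induced subgraph `G[U]`. -/
def ReachIn {V : Type*} (G : SimpleGraph V) (U : Set V) (x y : V) : Prop :=
  Relation.ReflTransGen (fun a b => a ∈ U ∧ b ∈ U ∧ G.Adj a b) x y

/-- `C` is a connected component of the induced undirected subgraph `G[U]`. -/
def IsCompOf {V : Type*} (G : SimpleGraph V) (U C : Set V) : Prop :=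
  ∃ x ∈ U, C = {y | ReachIn G U x y}

/-!
By the two-arc case of Menger's theorem, `u` two-reaches `v` exactly when no single arc separates
`u` from `v`. The nontrivial direction augments a path `P` along a path of the residual graph of
`P`; if there is none, the vertices reachable in the residual graph form a set left by a single arc.
The augmented arc set has net out-degree `2` at `u` and `-2` at `v`, and a cut-counting argument
peels two arc-disjoint paths off it.

Strong connectivity gives an arc leaving a component `C` of `G[V ∖ U]`, and it must enter `U`.
If `(a, b)` is such an arc, it separates `a` from `v`. Uncrossing two separating arcs shows that
separation by `(a, b)` spreads along every edge of `G[V ∖ U]`, hence to all of `C`; a second arc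
from `C` into `U` would give a path to `v` avoiding `(a, b)`.
-/

open Relation

section Paths

variable {V : Type*}

theorem pathArcs_cons_cons (a b : V) (l : List V) :
    pathArcs (a :: b :: l) = (a, b) :: pathArcs (b :: l) := rfl

theorem mem_of_mem_pathArcs {p : List V} {e : V × V} (h : e ∈ pathArcs p) :
    e.1 ∈ p ∧ e.2 ∈ p :=
  ⟨(List.of_mem_zip h).1, List.mem_of_mem_tail (List.of_mem_zip h).2⟩

theorem nodup_pathArcs : ∀ {p : List V}, p.Nodup → (pathArcs p).Nodup
  | [], _ | [_], _ => by simp [pathArcs]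
  | a :: b :: l, h => by
    rw [List.nodup_cons] at h
    rw [pathArcs_cons_cons, List.nodup_cons]
    exact ⟨fun hab => h.1 (mem_of_mem_pathArcs hab).1, nodup_pathArcs h.2⟩

theorem isChain_iff_forall_mem_pathArcs {A : V → V → Prop} :
    ∀ {p : List V}, p.IsChain A ↔ ∀ e ∈ pathArcs p, A e.1 e.2
  | [] | [_] => by simp [pathArcs]
  | a :: b :: l => by
    simp [pathArcs_cons_cons, isChain_iff_forall_mem_pathArcs (p := b :: l)]

theorem IsDipath.rel_of_mem_pathArcs {A : V → V → Prop} {p : List V} {x y : V}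
    (hp : IsDipath A p x y) {e : V × V} (he : e ∈ pathArcs p) : A e.1 e.2 :=
  isChain_iff_forall_mem_pathArcs.1 hp.2.2.2 e he

theorem IsDipath.of_forall_mem_pathArcs {A B : V → V → Prop} {p : List V} {x y : V}
    (hp : IsDipath A p x y) (h : ∀ e ∈ pathArcs p, B e.1 e.2) : IsDipath B p x y :=
  ⟨hp.1, hp.2.1, hp.2.2.1, isChain_iff_forall_mem_pathArcs.2 h⟩

theorem IsDipath.mono {A B : V → V → Prop} {p : List V} {x y : V} (hp : IsDipath A p x y)
    (h : ∀ a b, A a b → B a b) : IsDipath B p x y :=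
  ⟨hp.1, hp.2.1, hp.2.2.1, hp.2.2.2.imp fun a b => h a b⟩

theorem IsDipath.reflTransGen {A : V → V → Prop} {p : List V} {x y : V}
    (hp : IsDipath A p x y) : ReflTransGen A x y := by
  obtain ⟨hx, hy, -, hc⟩ := hp
  cases p with
  | nil => simp at hx
  | cons a l =>
    obtain rfl : a = x := by simpa using hx
    exact List.relationReflTransGen_of_exists_isChain_cons l hc
      (by simpa [List.getLast?_eq_some_getLast] using hy)

theorem exists_isDipath_of_reflTransGen {A : V → V → Prop} {x y : V}
    (h : ReflTransGen A x y) : ∃ p, IsDipath A p x y := by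
  induction h using ReflTransGen.head_induction_on with
  | refl => exact ⟨[y], rfl, rfl, List.nodup_singleton y, List.isChain_singleton y⟩
  | @head a b hab _ ih =>
    obtain ⟨p, hh, hl, hnd, hc⟩ := ih
    by_cases ha : a ∈ p
    · -- shortcut the cycle through `a`
      obtain ⟨s, t, rfl⟩ := List.append_of_mem ha
      have hsuf : (a :: t) <:+ s ++ a :: t := List.suffix_append s _
      exact ⟨a :: t, rfl, by simpa [List.getLast?_append] using hl, hnd.sublist hsuf.sublist,
        List.IsChain.suffix hc hsuf⟩
    · obtain ⟨p', rfl⟩ : ∃ p', p = b :: p' := by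
        cases p with
        | nil => simp at hh
        | cons c p' => exact ⟨p', by simpa using hh⟩
      exact ⟨a :: b :: p', rfl, by rwa [List.getLast?_cons_cons], List.nodup_cons.2 ⟨ha, hnd⟩,
        List.isChain_cons_cons.2 ⟨hab, hc⟩⟩

theorem sum_map_pathArcs {f : V → ℤ} :
    ∀ {p : List V} {s t : V}, p.head? = some s → p.getLast? = some t →
      ((pathArcs p).map fun e => f e.1 - f e.2).sum = f s - f t
  | [], _, _, hs, _ => by simp at hs
  | [a], s, t, hs, ht => by simp_all [pathArcs]
  | a :: b :: l, s, t, hs, ht => by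
    obtain rfl : a = s := by simpa using hs
    rw [pathArcs_cons_cons, List.map_cons, List.sum_cons,
      sum_map_pathArcs (s := b) rfl (by rwa [List.getLast?_cons_cons] at ht)]
    ring

theorem exists_rel_mem_notMem_of_reflTransGen {A : V → V → Prop} {X : Set V} {x y : V}
    (h : ReflTransGen A x y) (hx : x ∈ X) (hy : y ∉ X) :
    ∃ s t, A s t ∧ s ∈ X ∧ t ∉ X := by
  induction h with
  | refl => exact absurd hx hy
  | @tail b c _ hbc ih =>
    by_cases hb : b ∈ X
    · exact ⟨b, c, hbc, hb, hy⟩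
    · exact ih hb

end Paths

section NetOut

variable {V : Type*} [DecidableEq V]

def netOut (E : Finset (V × V)) (w : V) : ℤ :=
  ∑ e ∈ E, ((if e.1 = w then 1 else 0) - (if e.2 = w then 1 else 0))

theorem sum_netOut (E : Finset (V × V)) (S : Finset V) :
    ∑ w ∈ S, netOut E w =
      ∑ e ∈ E, ((if e.1 ∈ S then 1 else 0) - (if e.2 ∈ S then 1 else 0)) := by
  unfold netOut
  rw [Finset.sum_comm]
  simp only [Finset.sum_sub_distrib, Finset.sum_ite_eq]

theorem netOut_pathArcs {A : V → V → Prop} {p : List V} {s t : V} (hp : IsDipath A p s t)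
    (w : V) :
    netOut (pathArcs p).toFinset w = (if s = w then 1 else 0) - (if t = w then 1 else 0) := by
  rw [netOut, List.sum_toFinset _ (nodup_pathArcs hp.2.2.1)]
  exact sum_map_pathArcs (f := fun u => if u = w then 1 else 0) hp.1 hp.2.1

theorem exists_isDipath_of_netOut_pos [Fintype V] {E : Finset (V × V)} {x v : V}
    (hx : 0 < netOut E x) (hE : ∀ w ≠ v, 0 ≤ netOut E w) :
    ∃ p, IsDipath (fun a b => (a, b) ∈ E) p x v := by
  classical
  refine exists_isDipath_of_reflTransGen ?_
  by_contra hxv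
  let S := Finset.univ.filter (ReflTransGen (fun a b => (a, b) ∈ E) x)
  have hvS : v ∉ S := by simpa [S] using hxv
  -- nothing leaves the reachable set `S`, so its total net out-degree is `≤ 0`
  have hle : ∑ w ∈ S, netOut E w ≤ 0 := by
    rw [sum_netOut]
    refine Finset.sum_nonpos fun e he => ?_
    by_cases h1 : e.1 ∈ S
    · have h2 : e.2 ∈ S := by
        simp only [S, Finset.mem_filter, Finset.mem_univ, true_and] at h1 ⊢
        exact h1.tail he
      simp [h1, h2]
    · split_ifs <;> simp_all
  have hpos : 0 < ∑ w ∈ S, netOut E w :=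
    Finset.sum_pos' (fun w hw => hE w (ne_of_mem_of_not_mem hw hvS))
      ⟨x, by simp [S, ReflTransGen.refl], hx⟩
  exact hpos.not_ge hle

end NetOut

section Menger

variable {V : Type*}

def withoutArc (A : V → V → Prop) (f : V × V) (a b : V) : Prop :=
  A a b ∧ (a, b) ≠ f

theorem twoReaches_self (A : V → V → Prop) (x : V) : TwoReaches A x x :=
  have hx : IsDipath A [x] x x := ⟨rfl, rfl, List.nodup_singleton x, List.isChain_singleton x⟩
  ⟨[x], [x], hx, hx, by simp [pathArcs]⟩

theorem TwoReaches.reflTransGen_withoutArc {A : V → V → Prop} {x v : V} (h : TwoReaches A x v)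
    (f : V × V) : ReflTransGen (withoutArc A f) x v := by
  obtain ⟨p, q, hp, hq, hpq⟩ := h
  by_cases hf : f ∈ pathArcs p
  · exact (hq.of_forall_mem_pathArcs fun e he =>
      ⟨hq.rel_of_mem_pathArcs he, fun hef => hpq f hf (hef ▸ he)⟩).reflTransGen
  · exact (hp.of_forall_mem_pathArcs fun e he =>
      ⟨hp.rel_of_mem_pathArcs he, fun hef => hf (hef ▸ he)⟩).reflTransGen

def residualArc (A : V → V → Prop) (P : Finset (V × V)) (a b : V) : Prop :=
  (A a b ∧ (a, b) ∉ P) ∨ (b, a) ∈ P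

variable [DecidableEq V]

def augment (P Q : Finset (V × V)) : Finset (V × V) :=
  P.filter (fun e => e.swap ∉ Q) ∪ Q.filter (fun e => e.swap ∉ P)

theorem netOut_augment {P Q : Finset (V × V)} (h : Disjoint P Q) (w : V) :
    netOut (augment P Q) w = netOut P w + netOut Q w := by
  let g : V × V → ℤ := fun e => (if e.1 = w then 1 else 0) - (if e.2 = w then 1 else 0)
  have hcancel : ∑ e ∈ P.filter (fun e => e.swap ∈ Q), g e
      + ∑ e ∈ Q.filter (fun e => e.swap ∈ P), g e = 0 := by
    rw [← sub_neg_eq_add, sub_eq_zero, ← Finset.sum_neg_distrib]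
    exact Finset.sum_nbij' Prod.swap Prod.swap (by simp [and_comm]) (by simp [and_comm])
      (by simp) (by simp) fun e _ => by simp [g]
  have hdisj : Disjoint (P.filter fun e => e.swap ∉ Q) (Q.filter fun e => e.swap ∉ P) :=
    Finset.disjoint_filter_filter h
  change ∑ e ∈ augment P Q, g e = ∑ e ∈ P, g e + ∑ e ∈ Q, g e
  rw [augment, Finset.sum_union hdisj,
    ← Finset.sum_filter_add_sum_filter_not P (fun e => e.swap ∈ Q),
    ← Finset.sum_filter_add_sum_filter_not Q (fun e => e.swap ∈ P)]
  linarith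

variable [Fintype V]

theorem twoReaches_of_netOut_eq {A : V → V → Prop} {E : Finset (V × V)} {x v : V}
    (hA : ∀ e ∈ E, A e.1 e.2) (hxv : x ≠ v)
    (hE : ∀ w, netOut E w = 2 * ((if x = w then 1 else 0) - (if v = w then 1 else 0))) :
    TwoReaches A x v := by
  obtain ⟨p, hp⟩ := exists_isDipath_of_netOut_pos (E := E) (x := x) (v := v)
    (by simp [hE, hxv.symm])
    fun w hw => by simp only [hE, if_neg hw.symm]; split_ifs <;> norm_num
  let P := (pathArcs p).toFinset
  have hPE : P ⊆ E := fun e he => hp.rel_of_mem_pathArcs (List.mem_toFinset.1 he)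
  have hE' : ∀ w, netOut (E \ P) w = (if x = w then 1 else 0) - (if v = w then 1 else 0) := by
    intro w
    rw [netOut, Finset.sum_sdiff_eq_sub hPE, ← netOut, ← netOut, hE, netOut_pathArcs hp]
    ring
  obtain ⟨q, hq⟩ := exists_isDipath_of_netOut_pos (E := E \ P) (x := x) (v := v)
    (by simp [hE', hxv.symm])
    fun w hw => by simp only [hE', if_neg hw.symm]; split_ifs <;> norm_num
  refine ⟨p, q, hp.mono fun a b h => hA (a, b) h,
    hq.mono fun a b h => hA (a, b) (Finset.sdiff_subset h),
    fun e hep heq => ?_⟩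
  exact (Finset.mem_sdiff.1 (hq.rel_of_mem_pathArcs heq)).2 (List.mem_toFinset.2 hep)

theorem reflTransGen_residual {A : V → V → Prop} {P : List V} {x v : V} (hP : IsDipath A P x v)
    (h : ∀ f, ReflTransGen (withoutArc A f) x v) :
    ReflTransGen (residualArc A (pathArcs P).toFinset) x v := by
  classical
  by_contra hres
  set AP := (pathArcs P).toFinset
  let S := Finset.univ.filter (ReflTransGen (residualArc A AP) x)
  have hxS : x ∈ S := Finset.mem_filter.2 ⟨Finset.mem_univ x, .refl⟩
  have hvS : v ∉ S := by simpa [S] using hres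
  have hout : ∀ a b, A a b → a ∈ S → b ∉ S → (a, b) ∈ AP := by
    intro a b hab ha hb
    by_contra hne
    simp only [S, Finset.mem_filter, Finset.mem_univ, true_and] at ha hb
    exact hb (ha.tail (.inl ⟨hab, hne⟩))
  have hin : ∀ e ∈ AP, e.2 ∈ S → e.1 ∈ S := by
    intro e he h2
    simp only [S, Finset.mem_filter, Finset.mem_univ, true_and] at h2 ⊢
    exact h2.tail (.inr he)
  -- `P` runs from `x ∈ S` to `v ∉ S` and never enters `S`, so it leaves `S` exactly once
  have hcard : (AP.filter fun e => e.1 ∈ S ∧ e.2 ∉ S).card = 1 := by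
    have hsum : ∑ w ∈ S, netOut AP w = 1 := by
      simp [AP, netOut_pathArcs hP, Finset.sum_sub_distrib, Finset.sum_ite_eq, hxS, hvS]
    rw [sum_netOut] at hsum
    have : ((AP.filter fun e => e.1 ∈ S ∧ e.2 ∉ S).card : ℤ) = 1 := by
      rw [Finset.card_filter, Nat.cast_sum]
      refine Eq.trans (Finset.sum_congr rfl fun e he => ?_) hsum
      have := hin e he
      by_cases h1 : e.1 ∈ S <;> by_cases h2 : e.2 ∈ S <;> simp_all
    exact_mod_cast this
  obtain ⟨f, hf⟩ := Finset.card_eq_one.1 hcard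
  obtain ⟨a, b, ⟨hab, hne⟩, ha, hb⟩ :=
    exists_rel_mem_notMem_of_reflTransGen (X := ↑S) (h f) hxS hvS
  have : (a, b) ∈ AP.filter fun e => e.1 ∈ S ∧ e.2 ∉ S :=
    Finset.mem_filter.2 ⟨hout a b hab ha hb, ha, hb⟩
  exact hne (Finset.mem_singleton.1 (hf ▸ this))

end Menger

theorem twoReaches_iff_forall_reflTransGen_withoutArc {V : Type*} [Fintype V]
    {A : V → V → Prop} (hA : ∀ a b, A a b → ¬ A b a) {x v : V} :
    TwoReaches A x v ↔ ∀ f, ReflTransGen (withoutArc A f) x v := by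
  classical
  refine ⟨TwoReaches.reflTransGen_withoutArc, fun h => ?_⟩
  rcases eq_or_ne x v with rfl | hxv
  · exact twoReaches_self A x
  obtain ⟨P, hP⟩ :=
    exists_isDipath_of_reflTransGen (ReflTransGen.mono (fun _ _ hab => hab.1) x v (h (x, x)))
  obtain ⟨Q, hQ⟩ := exists_isDipath_of_reflTransGen (reflTransGen_residual hP h)
  set AP := (pathArcs P).toFinset
  set AQ := (pathArcs Q).toFinset
  have hPA : ∀ e ∈ AP, A e.1 e.2 := fun e he => hP.rel_of_mem_pathArcs (List.mem_toFinset.1 he)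
  have hQR : ∀ e ∈ AQ, residualArc A AP e.1 e.2 :=
    fun e he => hQ.rel_of_mem_pathArcs (List.mem_toFinset.1 he)
  have hdisj : Disjoint AP AQ := Finset.disjoint_left.2 fun e heP heQ =>
    (hQR e heQ).elim (fun h => h.2 heP) fun h => hA _ _ (hPA e heP) (hPA _ h)
  refine twoReaches_of_netOut_eq (E := augment AP AQ) ?_ hxv fun w => ?_
  · simp only [augment, Finset.mem_union, Finset.mem_filter]
    rintro e (⟨he, -⟩ | ⟨he, hswap⟩)
    · exact hPA e he
    · exact ((hQR e he).resolve_right hswap).1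
  · rw [netOut_augment hdisj, netOut_pathArcs hP, netOut_pathArcs hQ]
    ring

section Separation

variable {V : Type*} {A : V → V → Prop} {v : V}

def Separates (A : V → V → Prop) (f : V × V) (w v : V) : Prop :=
  ¬ ReflTransGen (withoutArc A f) w v

theorem reflTransGen_withoutArc_of_separates_snd {f g : V × V} (hg : Separates A f g.2 v)
    {w : V} (hw : ReflTransGen (withoutArc A f) w v) : ReflTransGen (withoutArc A g) w v := by
  induction hw using ReflTransGen.head_induction_on with
  | refl => exact .refl
  | @head a b hab hbv ih =>
    refine .head ⟨hab.1, ?_⟩ ih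
    rintro rfl
    exact hg hbv

theorem reflTransGen_withoutArc_or {f g : V × V} (hf : ReflTransGen (withoutArc A g) f.2 v)
    (hg : ReflTransGen (withoutArc A f) g.2 v) (hfg : f ≠ g) {z : V} (hz : ReflTransGen A z v) :
    ReflTransGen (withoutArc A f) z v ∨ ReflTransGen (withoutArc A g) z v := by
  induction hz using ReflTransGen.head_induction_on with
  | refl => exact .inl .refl
  | @head a b hab _ ih =>
    rcases ih with hbf | hbg
    · by_cases habf : (a, b) = f
      · subst habf
        exact .inr (.head ⟨hab, hfg⟩ hf)
      · exact .inl (.head ⟨hab, habf⟩ hbf)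
    · by_cases habg : (a, b) = g
      · subst habg
        exact .inl (.head ⟨hab, hfg.symm⟩ hg)
      · exact .inr (.head ⟨hab, habg⟩ hbg)

theorem separates_of_rel {a b : V} (hab : A a b) (hb : ∀ g, ReflTransGen (withoutArc A g) b v)
    (ha : ∃ g, Separates A g a v) : Separates A (a, b) a v := by
  obtain ⟨g, hg⟩ := ha
  obtain rfl : g = (a, b) := by
    by_contra hne
    exact hg (.head ⟨hab, Ne.symm hne⟩ (hb g))
  exact hg

theorem separates_of_separates_of_rel {f : V × V} (hf : ∀ g, ReflTransGen (withoutArc A g) f.2 v)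
    {z z' : V} (hzv : ReflTransGen A z v) (hz : Separates A f z v)
    (hz' : ∃ g, Separates A g z' v) (hzz' : A z z' ∨ A z' z) : Separates A f z' v := by
  intro hz'f
  obtain ⟨g, hz'g⟩ := hz'
  rcases hzz' with hzz' | hz'z
  · by_cases hf' : (z, z') = f
    · subst hf'
      exact hz'g (hf g)
    · exact hz (.head ⟨hzz', hf'⟩ hz'f)
  · have hgf : g ≠ f := by
      rintro rfl
      exact hz'g hz'f
    by_cases hg : ReflTransGen (withoutArc A f) g.2 v
    · have hzg := (reflTransGen_withoutArc_or (hf g) hg hgf.symm hzv).resolve_left hz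
      have hz'zg : (z', z) ≠ g := by
        rintro rfl
        exact hz hg
      exact hz'g (.head ⟨hz'z, hz'zg⟩ hzg)
    · exact hz'g (reflTransGen_withoutArc_of_separates_snd hg hz'f)

end Separation

section Components

variable {V : Type*} {G : SimpleGraph V} {U : Set V} {x y : V}

theorem ReachIn.mem_right (h : ReachIn G U x y) (hx : x ∈ U) : y ∈ U := by
  induction h with
  | refl => exact hx
  | tail _ hbc _ => exact hbc.2.1

theorem ReachIn.symm (h : ReachIn G U x y) : ReachIn G U y x := by
  induction h with
  | refl => exact .refl
  | tail _ hbc ih => exact .head ⟨hbc.2.1, hbc.1, hbc.2.2.symm⟩ ih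

theorem separates_of_reachIn (D : GraphOrientation G) {v : V}
    (hv : ∀ a, ReflTransGen D.arc a v)
    (hU : ∀ u, u ∈ U ↔ ∀ g, ReflTransGen (withoutArc D.arc g) u v) {f : V × V} (hf : f.2 ∈ U)
    (hx : Separates D.arc f x v) (hxy : ReachIn G Uᶜ x y) : Separates D.arc f y v := by
  induction hxy with
  | refl => exact hx
  | @tail b c _ hbc ih =>
    obtain ⟨-, hc, hadj⟩ := hbc
    exact separates_of_separates_of_rel ((hU _).1 hf) (hv b) ih
      (not_forall.1 (mt (hU c).2 hc)) ((D.adj_iff b c).1 hadj)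

end Components

/-- In a strongly connected orientation, if `U` is the set of vertices that two-reach a
vertex `v`, then every connected component of `G[V ∖ U]` has exactly one arc into `U`. -/
theorem stmt_11 {V : Type*} [Fintype V] (G : SimpleGraph V) (D : GraphOrientation G)
    (hsc : ∀ u v : V, Relation.ReflTransGen D.arc u v) (v : V)
    (U : Set V) (hU : U = {u | TwoReaches D.arc u v})
    (C : Set V) (hC : IsCompOf G Uᶜ C) :
    ∃! ab : V × V, ab.1 ∈ C ∧ ab.2 ∈ U ∧ D.arc ab.1 ab.2 := by
  have hU' : ∀ u, u ∈ U ↔ ∀ f, ReflTransGen (withoutArc D.arc f) u v := fun u => by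
    rw [hU]
    exact twoReaches_iff_forall_reflTransGen_withoutArc D.asymm
  obtain ⟨x₀, hx₀, rfl⟩ := hC
  have hCU : ∀ {y}, ReachIn G Uᶜ x₀ y → y ∉ U := fun hy => hy.mem_right hx₀
  have hvU : v ∈ U := (hU' v).2 fun _ => .refl
  obtain ⟨s, t, hst, hs, ht⟩ := exists_rel_mem_notMem_of_reflTransGen
    (X := {y | ReachIn G Uᶜ x₀ y}) (hsc x₀ v) .refl fun hv => hCU hv hvU
  have htU : t ∈ U := by
    by_contra htU
    exact ht (ReflTransGen.tail hs ⟨hCU hs, htU, (D.adj_iff s t).2 (.inl hst)⟩)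
  refine ⟨(s, t), ⟨hs, htU, hst⟩, ?_⟩
  rintro ⟨a, b⟩ ⟨ha, hb, hab⟩
  have hsep : Separates D.arc (a, b) s v :=
    separates_of_reachIn D (hsc · v) hU' hb
      (separates_of_rel hab ((hU' b).1 hb) (not_forall.1 (mt (hU' a).2 (hCU ha))))
      (ReflTransGen.trans (ReachIn.symm ha) hs)
  by_contra hne
  exact hsep (.head ⟨hst, Ne.symm hne⟩ ((hU' t).1 htU _))
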